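/- arXiv:2304.06442 — 2 statements merged into one kernel-verified Lean document; each statement's English description precedes it below -/
import Mathlib

section
/- (Series estimates for A_ν) Let ν > -1. For every real x with 0 ≤ x ≤ 2√(ν+1) one has the chain of inequalities 0 ≤ 1 - x²/(4(ν+1)) ≤ A_ν(x) ≤ 1 - x²/(4(ν+1)) + x⁴/(32(ν+1)(ν+2)) ≤ 1. -/
noncomputable section

/-- `A_ν(x) = ∑ (-1)^n (x/2)^{2n} / (n! (ν+1)⋯(ν+n))` (restricted to real `x`). -/
def AbesselR (ν : ℝ) (x : ℝ) : ℝ :=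
  ∑' n : ℕ, ((-1) ^ n * (x / 2) ^ (2 * n)) /
    ((n.factorial : ℝ) * ∏ i ∈ Finset.range n, (ν + i + 1))

set_option maxHeartbeats 1000000 in
theorem Abessel_series_estimates (ν : ℝ) (hν : -1 < ν) (x : ℝ)
    (hx0 : 0 ≤ x) (hx1 : x ≤ 2 * Real.sqrt (ν + 1)) :
    0 ≤ 1 - x ^ 2 / (4 * (ν + 1)) ∧
    1 - x ^ 2 / (4 * (ν + 1)) ≤ AbesselR ν x ∧
    AbesselR ν x ≤ 1 - x ^ 2 / (4 * (ν + 1)) + x ^ 4 / (32 * (ν + 1) * (ν + 2)) ∧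
    1 - x ^ 2 / (4 * (ν + 1)) + x ^ 4 / (32 * (ν + 1) * (ν + 2)) ≤ 1 := by
  have hν1 : (0:ℝ) < ν + 1 := by linarith
  have hν2 : (0:ℝ) < ν + 2 := by linarith
  have hxsq : x ^ 2 ≤ 4 * (ν + 1) := by
    have h2 : (2 * Real.sqrt (ν + 1)) ^ 2 = 4 * (ν + 1) := by
      rw [mul_pow, Real.sq_sqrt hν1.le]; ring
    calc x ^ 2 ≤ (2 * Real.sqrt (ν + 1)) ^ 2 := by
          apply pow_le_pow_left₀ hx0 hx1
      _ = 4 * (ν + 1) := h2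
  set f : ℕ → ℝ := fun n => (x / 2) ^ (2 * n) /
    ((n.factorial : ℝ) * ∏ i ∈ Finset.range n, (ν + i + 1)) with hf
  have hPpos : ∀ n, (0:ℝ) < ∏ i ∈ Finset.range n, (ν + i + 1) := by
    intro n
    apply Finset.prod_pos
    intro i _
    have : (0:ℝ) ≤ i := Nat.cast_nonneg i
    linarith
  have hfacpos : ∀ n : ℕ, (0:ℝ) < (n.factorial : ℝ) := fun n => by positivity
  have hfpos : ∀ n, 0 ≤ f n := by
    intro n
    exact div_nonneg (by positivity) (mul_pos (hfacpos n) (hPpos n)).le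
  have hc : (x / 2) ^ 2 ≤ ν + 1 := by
    rw [div_pow]; norm_num; linarith
  -- f is antitone
  have hanti : Antitone f := by
    apply antitone_nat_of_succ_le
    intro n
    have hfac : ((n+1).factorial : ℝ) = (n+1) * n.factorial := by
      push_cast [Nat.factorial_succ]; ring
    have hP : (∏ i ∈ Finset.range (n+1), (ν + i + 1))
        = (∏ i ∈ Finset.range n, (ν + i + 1)) * (ν + n + 1) := by
      rw [Finset.prod_range_succ]
    have h3 := hfacpos n
    have h4 := hPpos n
    have hn0 : (0:ℝ) ≤ (n:ℝ) := Nat.cast_nonneg n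
    have hnν : (0:ℝ) < ν + n + 1 := by linarith
    simp only [hf]
    rw [hfac, hP, show 2 * (n + 1) = 2 * n + 2 by ring, pow_add]
    rw [div_le_div_iff₀ (by positivity) (by positivity)]
    have h1 : (x / 2) ^ 2 ≤ (n + 1 : ℝ) * (ν + n + 1) := by nlinarith [hc]
    have h2 : (0:ℝ) ≤ (x/2) ^ (2*n) := by positivity
    calc (x/2)^(2*n) * (x/2)^2 * ((n.factorial:ℝ) * ∏ i ∈ Finset.range n, (ν + i + 1))
        ≤ ((x/2)^(2*n) * ((n+1:ℝ) * (ν + n + 1))) *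
          ((n.factorial:ℝ) * ∏ i ∈ Finset.range n, (ν + i + 1)) := by
          apply mul_le_mul_of_nonneg_right _ (by positivity)
          exact mul_le_mul_of_nonneg_left h1 h2
      _ = (x/2)^(2*n) * (((n:ℝ)+1) * (n.factorial:ℝ) *
          ((∏ i ∈ Finset.range n, (ν + i + 1)) * (ν + n + 1))) := by ring
  -- summability
  have hsum : Summable fun n => (-1 : ℝ) ^ n * f n := by
    apply Summable.of_abs
    apply Summable.of_nonneg_of_le (fun n => abs_nonneg _)
      (f := fun n => ((x/2)^2 / (ν+1)) ^ n / (n.factorial : ℝ))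
    · intro n
      have hPn : ((ν+1):ℝ)^n ≤ ∏ i ∈ Finset.range n, (ν + i + 1) := by
        calc ((ν+1):ℝ)^n = ∏ _i ∈ Finset.range n, (ν+1) := by
              rw [Finset.prod_const, Finset.card_range]
          _ ≤ _ := Finset.prod_le_prod (fun i _ => hν1.le)
              (fun i _ => by
                have : (0:ℝ) ≤ i := Nat.cast_nonneg i
                linarith)
      rw [abs_mul, abs_pow, abs_neg, abs_one, one_pow, one_mul,
        abs_of_nonneg (hfpos n)]
      simp only [hf]
      calc (x/2)^(2*n) / ((n.factorial:ℝ) * ∏ i ∈ Finset.range n, (ν + i + 1))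
          ≤ (x/2)^(2*n) / (((ν+1):ℝ)^n * (n.factorial:ℝ)) := by
            have hcle : ((ν+1):ℝ)^n * (n.factorial:ℝ)
                ≤ (n.factorial:ℝ) * ∏ i ∈ Finset.range n, (ν + i + 1) := by
              rw [mul_comm]
              exact mul_le_mul_of_nonneg_left hPn (hfacpos n).le
            exact div_le_div_of_nonneg_left (by positivity) (by positivity) hcle
        _ = ((x/2)^2 / (ν+1))^n / (n.factorial:ℝ) := by
            rw [pow_mul]; ring
    · exact Real.summable_pow_div_factorial _
  have hhs : HasSum (fun n => (-1 : ℝ) ^ n * f n) (AbesselR ν x) := by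
    have heq : AbesselR ν x = ∑' n : ℕ, (-1 : ℝ) ^ n * f n := tsum_congr fun n => by
      simp only [hf]; ring
    rw [heq]
    exact hsum.hasSum
  have htend : Filter.Tendsto (fun n => ∑ i ∈ Finset.range n, (-1:ℝ) ^ i * f i)
      Filter.atTop (nhds (AbesselR ν x)) := hhs.tendsto_sum_nat
  have hf0 : f 0 = 1 := by simp [hf]
  have hf1 : f 1 = x ^ 2 / (4 * (ν + 1)) := by
    have h1 : f 1 = (x / 2) ^ 2 / (ν + 1) := by
      simp [hf, Finset.prod_range_one]
    rw [h1, div_pow, div_div]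
    norm_num
  have hf2 : f 2 = x ^ 4 / (32 * (ν + 1) * (ν + 2)) := by
    have h1 : f 2 = (x / 2) ^ 4 / (2 * ((ν + 1) * (ν + 2))) := by
      simp [hf, Finset.prod_range_succ, Nat.factorial]
      ring_nf
    rw [h1, div_pow, div_div]
    norm_num
    ring_nf
  have hlow := hanti.alternating_series_le_tendsto htend 1
  have hhigh := hanti.tendsto_le_alternating_series htend 1
  rw [show 2 * 1 = 2 by norm_num, Finset.sum_range_succ, Finset.sum_range_one] at hlow
  rw [show 2 * 1 + 1 = 3 by norm_num, Finset.sum_range_succ, Finset.sum_range_succ,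
    Finset.sum_range_one] at hhigh
  rw [hf0, hf1] at hlow
  rw [hf0, hf1, hf2] at hhigh
  norm_num at hlow hhigh
  have hx2 : 0 ≤ x ^ 2 := sq_nonneg x
  refine ⟨?_, ?_, ?_, ?_⟩
  · have : x ^ 2 / (4 * (ν + 1)) ≤ 1 := by
      rw [div_le_one (by positivity)]; exact hxsq
    linarith
  · linarith [hlow]
  · linarith [hhigh]
  · have h1 : x ^ 4 / (32 * (ν + 1) * (ν + 2)) ≤ x ^ 2 / (4 * (ν + 1)) := by
      rw [div_le_div_iff₀ (by positivity) (by positivity)]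
      have h4 : x ^ 4 ≤ 4 * (ν + 1) * x ^ 2 := by nlinarith [hxsq, hx2]
      nlinarith [mul_le_mul_of_nonneg_left h4 hν1.le, mul_nonneg hx2 hν1.le]
    linarith
end
end

section
/- (Partial fraction root-of-unity identity) Let k ∈ ℕ, set ζ := e^{2πi/k}, and let s be an integer with 0 ≤ s ≤ k-1. Then for all complex numbers x, y with x^k ≠ y^k one has ∑_{r=0}^{k-1} ζ^{-rs} / (x - ζ^r y) = k · x^{k-s-1} · y^s / (x^k - y^k). (Note that x^k ≠ y^k guarantees x - ζ^r y ≠ 0 for every r.) -/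
theorem partial_fraction_root_of_unity (k : ℕ) (hk : 0 < k)
    (ζ : ℂ) (hζ : ζ = Complex.exp (2 * Real.pi * Complex.I / k))
    (s : ℕ) (hs : s ≤ k - 1) (x y : ℂ) (hxy : x ^ k ≠ y ^ k) :
    ∑ r ∈ Finset.range k, ζ ^ (-((r : ℤ) * (s : ℤ))) / (x - ζ ^ r * y) =
      (k : ℂ) * x ^ (k - s - 1) * y ^ s / (x ^ k - y ^ k) := by
  have hprim : IsPrimitiveRoot ζ k := by
    rw [hζ]; exact Complex.isPrimitiveRoot_exp k hk.ne'
  have hζ0 : ζ ≠ 0 := hprim.ne_zero hk.ne'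
  have hζk : ζ ^ k = 1 := hprim.pow_eq_one
  have hne : ∀ r : ℕ, x - ζ ^ r * y ≠ 0 := by
    intro r h
    rw [sub_eq_zero] at h
    apply hxy
    rw [h, mul_pow, ← pow_mul, mul_comm r k, pow_mul, hζk, one_pow, one_mul]
  have hxyk : x ^ k - y ^ k ≠ 0 := sub_ne_zero.mpr hxy
  rw [eq_div_iff hxyk, Finset.sum_mul]
  have key : ∀ r ∈ Finset.range k,
      ζ ^ (-((r : ℤ) * (s : ℤ))) / (x - ζ ^ r * y) * (x ^ k - y ^ k)
        = ∑ i ∈ Finset.range k,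
            (ζ ^ ((k : ℤ) - 1 - i - s)) ^ r * (x ^ i * y ^ (k - 1 - i)) := by
    intro r _
    have hfac : (∑ i ∈ Finset.range k, x ^ i * (ζ ^ r * y) ^ (k - 1 - i))
        * (x - ζ ^ r * y) = x ^ k - (ζ ^ r * y) ^ k := geom_sum₂_mul x (ζ ^ r * y) k
    have hyk : (ζ ^ r * y) ^ k = y ^ k := by
      rw [mul_pow, ← pow_mul, mul_comm r k, pow_mul, hζk, one_pow, one_mul]
    rw [hyk] at hfac
    have step : ζ ^ (-((r : ℤ) * (s : ℤ))) / (x - ζ ^ r * y) * (x ^ k - y ^ k)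
        = ζ ^ (-((r : ℤ) * (s : ℤ)))
            * ∑ i ∈ Finset.range k, x ^ i * (ζ ^ r * y) ^ (k - 1 - i) := by
      rw [← hfac, mul_comm (∑ i ∈ Finset.range k, x ^ i * (ζ ^ r * y) ^ (k - 1 - i))
        (x - ζ ^ r * y), ← mul_assoc, div_mul_cancel₀ _ (hne r)]
    rw [step, Finset.mul_sum]
    refine Finset.sum_congr rfl fun i hi => ?_
    have hik : i < k := Finset.mem_range.mp hi
    have h1 : ((k - 1 - i : ℕ) : ℤ) = (k : ℤ) - 1 - i := by
      have : i ≤ k - 1 := by omega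
      omega
    rw [mul_pow, ← pow_mul,
      show x ^ i * (ζ ^ (r * (k - 1 - i)) * y ^ (k - 1 - i))
        = ζ ^ (r * (k - 1 - i)) * (x ^ i * y ^ (k - 1 - i)) by ring, ← mul_assoc]
    congr 1
    rw [← zpow_natCast ζ (r * (k - 1 - i)), ← zpow_add₀ hζ0,
      ← zpow_natCast (ζ ^ ((k : ℤ) - 1 - ↑i - ↑s)) r, ← zpow_mul]
    congr 1
    push_cast [h1]
    ring
  rw [Finset.sum_congr rfl key, Finset.sum_comm]
  have inner : ∀ i ∈ Finset.range k,
      ∑ r ∈ Finset.range k, (ζ ^ ((k : ℤ) - 1 - i - s)) ^ r * (x ^ i * y ^ (k - 1 - i))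
        = (if i = k - 1 - s then (k : ℂ) * (x ^ i * y ^ (k - 1 - i)) else 0) := by
    intro i hi
    have hik : i < k := Finset.mem_range.mp hi
    rw [← Finset.sum_mul]
    by_cases hcase : i = k - 1 - s
    · rw [if_pos hcase]
      have he : (k : ℤ) - 1 - i - s = 0 := by omega
      rw [he, zpow_zero]
      simp
    · rw [if_neg hcase]
      have hw1 : ζ ^ ((k : ℤ) - 1 - i - s) ≠ 1 := by
        intro h
        rw [hprim.zpow_eq_one_iff_dvd] at h
        have h0 : (k : ℤ) - 1 - i - s = 0 :=
          Int.eq_zero_of_abs_lt_dvd h (by rw [abs_lt]; omega)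
        omega
      have hwk : (ζ ^ ((k : ℤ) - 1 - i - s)) ^ k = 1 := by
        rw [← zpow_natCast _ k, ← zpow_mul, mul_comm, zpow_mul, zpow_natCast, hζk,
          one_zpow]
      rw [geom_sum_eq hw1, hwk, sub_self, zero_div, zero_mul]
  rw [Finset.sum_congr rfl inner, Finset.sum_ite_eq' (Finset.range k) (k - 1 - s)]
  have hmem : k - 1 - s ∈ Finset.range k := Finset.mem_range.mpr (by omega)
  rw [if_pos hmem]
  have h2 : k - 1 - (k - 1 - s) = s := by omega
  have h3 : k - 1 - s = k - s - 1 := by omega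
  rw [h2, h3, mul_assoc]
end
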